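/- Let A be a commutative local ring and g ∈ GL_n(A). Then g can be written as a product E · diag(det g, 1, …, 1), where E is a finite product of elementary transvections. -/

import Mathlib

/-!
Since `det g` is a unit and `A` is local, in every column some entry in a row not yet used as a
pivot is a unit. So Gaussian elimination using row transvections only reduces `g` to a diagonal
matrix `D` of units. Whitehead's identity writes `diag(u, u⁻¹)` as a product of transvections,
which moves every diagonal entry of `D` into position `0`, leaving `diag(det g, 1, …, 1)`.
-/

namespace Matrix

variable (n R : Type*) [DecidableEq n] [Fintype n] [CommRing R]

def elementarySubmonoid : Submonoid (Matrix n n R) :=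
  Submonoid.closure {M | ∃ (i j : n) (c : R), i ≠ j ∧ M = transvection i j c}

variable {n R}

theorem transvection_mem_elementarySubmonoid {i j : n} (h : i ≠ j) (c : R) :
    transvection i j c ∈ elementarySubmonoid n R :=
  Submonoid.subset_closure ⟨i, j, c, h, rfl⟩

theorem det_eq_one_of_mem_elementarySubmonoid {M : Matrix n n R}
    (hM : M ∈ elementarySubmonoid n R) : M.det = 1 := by
  induction hM using Submonoid.closure_induction with
  | mem M hM =>
    obtain ⟨i, j, c, hij, rfl⟩ := hM
    exact det_transvection_of_ne i j hij c
  | one => exact det_one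
  | mul M N _ _ hM hN => rw [det_mul, hM, hN, mul_one]

theorem inv_transvection {i j : n} (h : i ≠ j) (c : R) :
    (transvection i j c)⁻¹ = transvection i j (-c) :=
  inv_eq_left_inv <| by
    rw [transvection_mul_transvection_same _ _ h, neg_add_cancel, transvection_zero]

theorem nonsing_inv_mem_elementarySubmonoid {M : Matrix n n R}
    (hM : M ∈ elementarySubmonoid n R) : M⁻¹ ∈ elementarySubmonoid n R := by
  induction hM using Submonoid.closure_induction with
  | mem M hM =>
    obtain ⟨i, j, c, hij, rfl⟩ := hM
    rw [inv_transvection hij]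
    exact transvection_mem_elementarySubmonoid hij _
  | one => rw [inv_one]; exact one_mem _
  | mul M N _ _ hM hN => rw [mul_inv_rev]; exact mul_mem hN hM

theorem one_add_vecMulVec_single_mem_elementarySubmonoid {q : n} {v : n → R} (hv : v q = 0) :
    1 + vecMulVec v (Pi.single q 1) ∈ elementarySubmonoid n R := by
  let P : (n → R) → Prop := fun w =>
    w q = 0 ∧ 1 + vecMulVec w (Pi.single q 1) ∈ elementarySubmonoid n R
  have hadd : ∀ w w', P w → P w' → P (w + w') := by
    rintro w w' ⟨hw, hwE⟩ ⟨hw', hw'E⟩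
    refine ⟨by simp [hw, hw'], ?_⟩
    have : (1 + vecMulVec w (Pi.single q 1)) * (1 + vecMulVec w' (Pi.single q 1)) =
        1 + vecMulVec (w + w') (Pi.single q 1) := by
      simp [add_mul, mul_add, vecMulVec_mul_vecMulVec, hw', add_vecMulVec]
      abel
    exact this ▸ mul_mem hwE hw'E
  have hzero : P 0 := ⟨rfl, by simp [one_mem]⟩
  have hsingle : ∀ a ∈ Finset.univ, P (Pi.single a (v a)) := by
    intro a _
    by_cases ha : a = q
    · subst ha; simpa [hv] using hzero
    · refine ⟨by simp [Ne.symm ha], ?_⟩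
      have : vecMulVec (Pi.single a (v a)) (Pi.single q 1) = single a q (v a) := by
        ext i j; simp only [vecMulVec, Pi.single_apply, single_apply, of_apply]; grind
      rw [this]
      exact transvection_mem_elementarySubmonoid ha (v a)
  have := Finset.sum_induction _ P hadd hzero hsingle
  rw [Finset.univ_sum_single] at this
  exact this.2

theorem diagonal_mulSingle_mem_elementarySubmonoid {i j : n} (h : i ≠ j) (u : Rˣ) :
    diagonal (Pi.mulSingle i (u : R) * Pi.mulSingle j (↑u⁻¹ : R)) ∈ elementarySubmonoid n R := by
  -- `w(u) w(-1)` for `w(u) = t_ij(u) t_ji(-u⁻¹) t_ij(u)`, with `t_ij(u) t_ij(-1)` merged.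
  have key : transvection i j (u : R) * (transvection j i (-(↑u⁻¹ : R)) *
      (transvection i j ((u : R) - 1) * (transvection j i 1 * transvection i j (-1)))) =
      diagonal (Pi.mulSingle i (u : R) * Pi.mulSingle j (↑u⁻¹ : R)) := by
    have hu : (↑u⁻¹ : R) * u = 1 := u.inv_mul
    ext a b
    rcases eq_or_ne a i with rfl | hai <;> [skip; rcases eq_or_ne a j with rfl | haj] <;>
      simp only [transvection_mul_apply_same, transvection_mul_apply_of_ne, ne_eq,
        not_false_eq_true, h.symm, *] <;>
      simp only [transvection, add_apply, one_apply, single_apply, diagonal_apply, Pi.mul_apply,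
        Pi.mulSingle_apply] <;>
      split_ifs <;> grind
  rw [← key]
  have hij := transvection_mem_elementarySubmonoid (R := R) h
  have hji := transvection_mem_elementarySubmonoid (R := R) h.symm
  exact mul_mem (hij _) (mul_mem (hji _) (mul_mem (hij _) (mul_mem (hji _) (hij _))))

theorem exists_mem_elementarySubmonoid_diagonal_mulSingle_mul {z a : n} (x : R) {d : R}
    (hd : IsUnit d) : ∃ e ∈ elementarySubmonoid n R,
      diagonal (Pi.mulSingle z x) * diagonal (Pi.mulSingle a d) =
        e * diagonal (Pi.mulSingle z (x * d)) := by
  rcases eq_or_ne a z with rfl | haz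
  · exact ⟨1, one_mem _, by rw [diagonal_mul_diagonal, ← Pi.mul_def, ← Pi.mulSingle_mul, one_mul]⟩
  obtain ⟨u, rfl⟩ := hd
  refine ⟨_, diagonal_mulSingle_mem_elementarySubmonoid haz u, ?_⟩
  rw [diagonal_mul_diagonal, diagonal_mul_diagonal]
  congr 1
  ext k
  have := u.inv_mul
  simp only [Pi.mul_apply, Pi.mulSingle_apply]
  split_ifs <;> grind

theorem exists_mem_elementarySubmonoid_diagonal_eq_mul (z : n) {D : n → R}
    (hD : ∀ k, IsUnit (D k)) : ∃ e ∈ elementarySubmonoid n R,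
      diagonal D = e * diagonal (Pi.mulSingle z (∏ k, D k)) := by
  suffices ∀ s : Finset n, ∃ e ∈ elementarySubmonoid n R,
      diagonal (∏ k ∈ s, Pi.mulSingle k (D k)) = e * diagonal (Pi.mulSingle z (∏ k ∈ s, D k)) by
    simpa only [Finset.univ_prod_mulSingle] using this Finset.univ
  intro s
  induction s using Finset.induction_on with
  | empty => exact ⟨1, one_mem _, by simp⟩
  | insert a s ha ih =>
    obtain ⟨e, he, hs⟩ := ih
    obtain ⟨h, hh, hmerge⟩ :=
      exists_mem_elementarySubmonoid_diagonal_mulSingle_mul (z := z) (∏ k ∈ s, D k) (hD a)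
    refine ⟨e * h, mul_mem he hh, ?_⟩
    rw [Finset.prod_insert ha, Finset.prod_insert ha, mul_comm, Pi.mul_def,
      ← diagonal_mul_diagonal, hs, Matrix.mul_assoc, hmerge, Matrix.mul_assoc, mul_comm (D a)]

theorem exists_mem_elementarySubmonoid_mul_apply_eq_zero {M : Matrix n n R} {q : n}
    (hq : IsUnit (M q q)) : ∃ e ∈ elementarySubmonoid n R,
      (∀ a ≠ q, (e * M) a q = 0) ∧ ∀ a b, M q b = 0 → (e * M) a b = M a b := by
  obtain ⟨u, hu⟩ := hq
  let v : n → R := fun a => if a = q then 0 else -(M a q) * ↑u⁻¹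
  have hv : v q = 0 := if_pos rfl
  have hmul : ∀ a b, ((1 + vecMulVec v (Pi.single q 1)) * M) a b = M a b + v a * M q b := by
    intro a b
    simp [add_mul, vecMulVec_mul, vecMulVec_apply]
  refine ⟨_, one_add_vecMulVec_single_mem_elementarySubmonoid hv, fun a ha => ?_, fun a b hb => ?_⟩
  · rw [hmul, ← hu]
    simp [v, ha, mul_assoc]
  · rw [hmul, hb, mul_zero, add_zero]

section IsLocalRing

variable [IsLocalRing R]

theorem exists_isUnit_apply_of_isUnit_det {M : Matrix n n R} {s : Finset n} {q : n} (hq : q ∈ s)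
    (hM : ∀ a b, b ∉ s → a ≠ b → M a b = 0) (hdet : IsUnit M.det) : ∃ p ∈ s, IsUnit (M p q) := by
  by_contra! h
  refine (IsLocalRing.mem_maximalIdeal _).mp ?_ hdet
  rw [det_apply']
  refine Ideal.sum_mem _ fun σ _ => Ideal.mul_mem_left _ _ ?_
  by_cases hσ : σ q ∈ s
  · rw [← Finset.mul_prod_erase _ _ (Finset.mem_univ q)]
    exact Ideal.mul_mem_right _ _ (h _ hσ)
  · have hσq : σ (σ q) ≠ σ q := fun e => hσ (by rw [σ.injective e]; exact hq)
    rw [Finset.prod_eq_zero (f := fun b => M (σ b) b) (Finset.mem_univ (σ q)) (hM _ _ hσ hσq)]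
    exact zero_mem _

theorem exists_mem_elementarySubmonoid_isUnit_mul_apply {M : Matrix n n R} {s : Finset n} {q : n}
    (hq : q ∈ s) (hM : ∀ a b, b ∉ s → a ≠ b → M a b = 0) (hdet : IsUnit M.det) :
    ∃ e ∈ elementarySubmonoid n R, IsUnit ((e * M) q q) ∧ ∀ a, ∀ b ∉ s, (e * M) a b = M a b := by
  obtain ⟨p, hp, u, hu⟩ := exists_isUnit_apply_of_isUnit_det hq hM hdet
  rcases eq_or_ne q p with rfl | hqp
  · exact ⟨1, one_mem _, by rw [one_mul, ← hu]; exact u.isUnit, fun _ _ _ => by rw [one_mul]⟩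
  refine ⟨transvection q p ((1 - M q q) * (↑u⁻¹ : R)), transvection_mem_elementarySubmonoid hqp _,
    ?_, fun a b hb => ?_⟩
  · rw [transvection_mul_apply_same, mul_assoc, ← hu, Units.inv_mul, mul_one, add_sub_cancel]
    exact isUnit_one
  · rcases eq_or_ne a q with rfl | haq
    · rw [transvection_mul_apply_same, hM p b hb (by rintro rfl; exact hb hp), mul_zero, add_zero]
    · exact transvection_mul_apply_of_ne q p a b haq _ M

theorem exists_mem_elementarySubmonoid_mul_eq_diagonal {M : Matrix n n R} (hdet : IsUnit M.det) :
    ∃ e ∈ elementarySubmonoid n R, ∃ D, e * M = diagonal D := by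
  suffices ∀ (s : Finset n) (M : Matrix n n R), IsUnit M.det →
      (∀ a b, b ∉ s → a ≠ b → M a b = 0) → ∃ e ∈ elementarySubmonoid n R, ∃ D, e * M = diagonal D
    from this Finset.univ M hdet fun _ b hb => absurd (Finset.mem_univ b) hb
  intro s
  induction s using Finset.induction_on with
  | empty =>
    intro M _ hM
    refine ⟨1, one_mem _, fun a => M a a, ?_⟩
    ext a b
    rcases eq_or_ne a b with rfl | hab
    · simp
    · simp [hab, hM a b (Finset.notMem_empty b) hab]
  | insert q s hqs ih =>
    intro M hdet hM
    obtain ⟨e₁, he₁, hpivot, hcols⟩ :=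
      exists_mem_elementarySubmonoid_isUnit_mul_apply (Finset.mem_insert_self q s) hM hdet
    obtain ⟨e₂, he₂, hcolq, hkeep⟩ := exists_mem_elementarySubmonoid_mul_apply_eq_zero hpivot
    have hdet' : IsUnit (e₂ * (e₁ * M)).det := by
      rwa [det_mul, det_mul, det_eq_one_of_mem_elementarySubmonoid he₂,
        det_eq_one_of_mem_elementarySubmonoid he₁, one_mul, one_mul]
    have hM' : ∀ a b, b ∉ s → a ≠ b → (e₂ * (e₁ * M)) a b = 0 := by
      intro a b hb hab
      rcases eq_or_ne b q with rfl | hbq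
      · exact hcolq a hab
      have hb' : b ∉ insert q s := by simp [hbq, hb]
      rw [hkeep a b (by rw [hcols q b hb']; exact hM q b hb' (Ne.symm hbq)), hcols a b hb',
        hM a b hb' hab]
    obtain ⟨e₃, he₃, D, hD⟩ := ih _ hdet' hM'
    exact ⟨e₃ * e₂ * e₁, mul_mem (mul_mem he₃ he₂) he₁, D, by simpa only [Matrix.mul_assoc]⟩

theorem exists_mem_elementarySubmonoid_eq_mul_diagonal_det {M : Matrix n n R}
    (hdet : IsUnit M.det) (z : n) :
    ∃ e ∈ elementarySubmonoid n R, M = e * diagonal (Pi.mulSingle z M.det) := by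
  obtain ⟨e, he, D, hD⟩ := exists_mem_elementarySubmonoid_mul_eq_diagonal hdet
  have hprod : ∏ k, D k = M.det := by
    rw [← det_diagonal, ← hD, det_mul, det_eq_one_of_mem_elementarySubmonoid he, one_mul]
  obtain ⟨e', he', hD'⟩ := exists_mem_elementarySubmonoid_diagonal_eq_mul z
    (IsUnit.prod_univ_iff.mp (hprod ▸ hdet))
  refine ⟨e⁻¹ * e', mul_mem (nonsing_inv_mem_elementarySubmonoid he) he', ?_⟩
  have he_det : IsUnit e.det := by rw [det_eq_one_of_mem_elementarySubmonoid he]; exact isUnit_one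
  calc M = e⁻¹ * (e * M) := (nonsing_inv_mul_cancel_left e M he_det).symm
    _ = e⁻¹ * e' * diagonal (Pi.mulSingle z M.det) := by rw [hD, hD', hprod, Matrix.mul_assoc]

end IsLocalRing

end Matrix

/-- Over a commutative local ring, every invertible matrix `g` factors as
`E * diag(det g, 1, …, 1)` where `E` is a finite product of elementary transvections. -/
theorem gl_n_factorization_local
    (A : Type*) [CommRing A] [IsLocalRing A] (n : ℕ)
    (g : GL (Fin (n + 1)) A) :
    ∃ L : List (Matrix (Fin (n + 1)) (Fin (n + 1)) A),
      (∀ N ∈ L, ∃ (i j : Fin (n + 1)) (c : A), i ≠ j ∧ N = Matrix.transvection i j c) ∧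
      (g : Matrix (Fin (n + 1)) (Fin (n + 1)) A) =
        L.prod * Matrix.diagonal (fun k => if k = 0 then (g : Matrix (Fin (n + 1)) (Fin (n + 1)) A).det else 1) := by
  obtain ⟨e, he, hg⟩ :=
    Matrix.exists_mem_elementarySubmonoid_eq_mul_diagonal_det (Matrix.isUnits_det_units g) 0
  obtain ⟨L, hL, rfl⟩ := Submonoid.exists_list_of_mem_closure he
  refine ⟨L, hL, hg.trans ?_⟩
  congr 2
  ext k
  exact Pi.mulSingle_apply 0 _ k
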